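/- arXiv:1507.06297 — 5 statements merged into one kernel-verified Lean document; each statement's English description precedes it below -/
import Mathlib

section
/- Let K be a commutative ring equipped with an ℝ-algebra structure such that K is a field and K is finite-dimensional as a real vector space. Suppose that every nontrivial finite-dimensional commutative ℝ-algebra A admits an ℝ-algebra homomorphism A →ₐ[ℝ] K. Then K is isomorphic to ℂ as an ℝ-algebra. -/
/-- If `K` is a finite-dimensional `ℝ`-algebra which is a field and which receives
an `ℝ`-algebra homomorphism from every nontrivial finite-dimensional commutative
`ℝ`-algebra, then `K ≅ ℂ` as `ℝ`-algebras. -/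
theorem algEquiv_complex_of_receives_all
    (K : Type) [CommRing K] [Algebra ℝ K] (hK : IsField K)
    [FiniteDimensional ℝ K]
    (h : ∀ (A : Type) [CommRing A] [Algebra ℝ A], Nontrivial A →
      FiniteDimensional ℝ A → Nonempty (A →ₐ[ℝ] K)) :
    Nonempty (K ≃ₐ[ℝ] ℂ) := by
  letI := hK.toField
  obtain ⟨φ⟩ := h ℂ inferInstance inferInstance
  letI : Algebra ℂ K := φ.toRingHom.toAlgebra
  haveI : IsScalarTower ℝ ℂ K :=
    IsScalarTower.of_algebraMap_eq (fun x => (φ.commutes x).symm)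
  haveI : FiniteDimensional ℂ K := by
    rename_i iA _ _ _
    have hfin : Module.Finite ℝ K := by
      convert (‹_› : @FiniteDimensional ℝ K _ _ (@Algebra.toModule ℝ K _ _ ‹Algebra ℝ K›)) using 2
      · ext r x
        exact (congrArg (· * x) (φ.commutes r)).trans (@Algebra.smul_def ℝ K _ _ iA r x).symm
    exact Module.Finite.right ℝ ℂ K
  have hsurj : Function.Surjective (algebraMap ℂ K) :=
    IsAlgClosed.algebraMap_bijective_of_isIntegral.2
  have hbij : Function.Bijective (Algebra.ofId ℂ K) :=
    ⟨(algebraMap ℂ K).injective, hsurj⟩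
  let e : ℂ ≃ₐ[ℂ] K := AlgEquiv.ofBijective (Algebra.ofId ℂ K) hbij
  exact ⟨((e.restrictScalars ℝ)).symm⟩
end

section
/- Let R and S be commutative rings and let f, g : R →+* S be ring homomorphisms. If the extension-of-scalars functors along f and along g, from the category of R-modules to the category of S-modules (M ↦ S ⊗_{R} M, scalars acting through f resp. g), are naturally isomorphic as functors, then f = g. -/
open CategoryTheory

open scoped ChangeOfRings

/-- If the extension-of-scalars functors along two ring homomorphisms
`f g : R →+* S` are naturally isomorphic, then `f = g`. -/
theorem ringHom_eq_of_extendScalars_iso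
    {R : Type} {S : Type} [CommRing R] [CommRing S] (f g : R →+* S)
    (h : Nonempty (ModuleCat.extendScalars f ≅ ModuleCat.extendScalars g)) :
    f = g := by
  obtain ⟨e⟩ := h
  ext r
  set M : ModuleCat.{u_1} R := ModuleCat.of R (ULift.{u_1} R) with hM
  let φ : M ⟶ M := ModuleCat.ofHom (LinearMap.lsmul R (ULift.{u_1} R) r)
  set t := e.hom.app M ((1 : S) ⊗ₜ[R,f] (1 : ULift.{u_1} R)) with ht
  -- the inverse sends t back
  have hinv : e.inv.app M t = (1 : S) ⊗ₜ[R,f] (1 : ULift.{u_1} R) := by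
    have h0 := ConcreteCategory.congr_hom (e.hom_inv_id_app M)
      ((1 : S) ⊗ₜ[R,f] (1 : ULift.{u_1} R))
    change e.inv.app M (e.hom.app M ((1 : S) ⊗ₜ[R,f] (1 : ULift.{u_1} R) : (ModuleCat.extendScalars f).obj M)) = ((1 : S) ⊗ₜ[R,f] (1 : ULift.{u_1} R) : (ModuleCat.extendScalars f).obj M) at h0
    exact h0
  -- (extendScalars g).map φ acts as g r • ·
  have keyg : ∀ x : (ModuleCat.extendScalars g).obj M,
      (ModuleCat.extendScalars g).map φ x = g r • x := by
    intro x
    induction x using TensorProduct.induction_on with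
    | zero => exact ((ModuleCat.extendScalars g).map φ).hom.map_zero.trans (smul_zero (A := (ModuleCat.extendScalars g).obj M) (g r)).symm
    | tmul s m =>
        refine (ModuleCat.ExtendScalars.map_tmul g φ s m).trans ?_
        refine Eq.trans ?_ (ModuleCat.ExtendScalars.smul_tmul g (g r) s m).symm
        show (s ⊗ₜ[R,g] (r • m)) = _
        letI : TensorProduct.CompatibleSMul R R ((ModuleCat.restrictScalars g).obj (ModuleCat.of S S)) M := TensorProduct.CompatibleSMul.isScalarTower
        exact (TensorProduct.smul_tmul (R := R) (R' := R) (M := (ModuleCat.restrictScalars g).obj (ModuleCat.of S S)) (N := M) r s m).symm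
    | add x y hx hy =>
        exact ((((ModuleCat.extendScalars g).map φ).hom.map_add x y).trans (by rw [hx, hy]; exact (smul_add (A := (ModuleCat.extendScalars g).obj M) (g r) x y).symm))
  -- naturality of e.hom at φ, applied to 1 ⊗ 1
  have h1 := ConcreteCategory.congr_hom (e.hom.naturality φ)
    ((1 : S) ⊗ₜ[R,f] (1 : ULift.{u_1} R))
  change e.hom.app M ((ModuleCat.extendScalars f).map φ ((1 : S) ⊗ₜ[R,f] (1 : ULift.{u_1} R) : (ModuleCat.extendScalars f).obj M)) =
    (ModuleCat.extendScalars g).map φ (e.hom.app M ((1 : S) ⊗ₜ[R,f] (1 : ULift.{u_1} R) : (ModuleCat.extendScalars f).obj M)) at h1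
  have hl : ∀ x : (ModuleCat.extendScalars f).obj M,
      (ModuleCat.extendScalars f).map φ x = f r • x := by
    intro x
    induction x using TensorProduct.induction_on with
    | zero => exact ((ModuleCat.extendScalars f).map φ).hom.map_zero.trans (smul_zero (A := (ModuleCat.extendScalars f).obj M) (f r)).symm
    | tmul s m =>
        refine (ModuleCat.ExtendScalars.map_tmul f φ s m).trans ?_
        refine Eq.trans ?_ (ModuleCat.ExtendScalars.smul_tmul f (f r) s m).symm
        show (s ⊗ₜ[R,f] (r • m)) = _
        letI : TensorProduct.CompatibleSMul R R ((ModuleCat.restrictScalars f).obj (ModuleCat.of S S)) M := TensorProduct.CompatibleSMul.isScalarTower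
        exact (TensorProduct.smul_tmul (R := R) (R' := R) (M := (ModuleCat.restrictScalars f).obj (ModuleCat.of S S)) (N := M) r s m).symm
    | add x y hx hy =>
        exact ((((ModuleCat.extendScalars f).map φ).hom.map_add x y).trans (by rw [hx, hy]; exact (smul_add (A := (ModuleCat.extendScalars f).obj M) (f r) x y).symm))
  -- turn naturality into f r • t = g r • t
  have h2 : f r • t = g r • t := by
    exact ((e.hom.app M).hom.map_smul (f r) (show (ModuleCat.extendScalars f).obj M from (1 : S) ⊗ₜ[R,f] (1 : ULift.{u_1} R))).symm.trans
      ((congrArg (e.hom.app M) (hl (show (ModuleCat.extendScalars f).obj M from (1 : S) ⊗ₜ[R,f] (1 : ULift.{u_1} R))).symm).trans (h1.trans (keyg _)))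
  -- push through the inverse
  have h3 : f r • (show (ModuleCat.extendScalars f).obj M from (1 : S) ⊗ₜ[R,f] (1 : ULift.{u_1} R))
      = g r • (show (ModuleCat.extendScalars f).obj M from (1 : S) ⊗ₜ[R,f] (1 : ULift.{u_1} R)) := by
    have := congrArg (e.inv.app M) h2
    rwa [(e.inv.app M).hom.map_smul, (e.inv.app M).hom.map_smul, hinv] at this
  have h4 : ((f r) ⊗ₜ[R,f] (1 : ULift.{u_1} R)) = ((g r) ⊗ₜ[R,f] (1 : ULift.{u_1} R)) := by
    have := h3
    rw [show f r • (show (ModuleCat.extendScalars f).obj M from (1 : S) ⊗ₜ[R,f] (1 : ULift.{u_1} R)) = ((f r * 1) ⊗ₜ[R,f] (1 : ULift.{u_1} R)) from rfl,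
        show g r • (show (ModuleCat.extendScalars f).obj M from (1 : S) ⊗ₜ[R,f] (1 : ULift.{u_1} R)) = ((g r * 1) ⊗ₜ[R,f] (1 : ULift.{u_1} R)) from rfl,
        mul_one, mul_one] at this
    exact this
  -- map down to S via lTensor with ULift.moduleEquiv, then rid
  letI : Module R S := Module.compHom S f
  have h5 := congrArg (LinearMap.lTensor _ (ULift.moduleEquiv (R := R) (M := R)).toLinearMap) h4
  rw [LinearMap.lTensor_tmul, LinearMap.lTensor_tmul] at h5
  have h6 := congrArg (TensorProduct.rid R _) h5
  rw [TensorProduct.rid_tmul, TensorProduct.rid_tmul] at h6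
  simpa using h6
end

section
/- Let R and S be commutative rings and let F be an additive functor from the category of R-modules to the category of S-modules that preserves all small colimits and is equipped with a monoidal structure with respect to the tensor products ⊗_R and ⊗_S (i.e. F is a monoidal functor). Then there exists a ring homomorphism f : R →+* S and a natural isomorphism between F and the extension-of-scalars functor along f (M ↦ S ⊗_{R} M with scalars acting through f). -/
open CategoryTheory CategoryTheory.Limits

set_option linter.unusedSectionVars false

namespace EW
variable {R S : Type} [CommRing R] [CommRing S]
  (F : ModuleCat R ⥤ ModuleCat S) [F.Additive] [Limits.PreservesColimits F] [F.Monoidal]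

noncomputable def η : ModuleCat.of S S ≅ F.obj (ModuleCat.of R R) := Functor.Monoidal.εIso F

noncomputable def one : F.obj (ModuleCat.of R R) := (η F).hom (1 : S)

lemma η_inv_hom (x : S) : (η F).inv ((η F).hom x) = x :=
  congrArg (fun (g : ModuleCat.of S S ⟶ ModuleCat.of S S) => g x) (η F).hom_inv_id

lemma η_hom_inv (y : F.obj (ModuleCat.of R R)) : (η F).hom ((η F).inv y) = y :=
  congrArg (fun (g : F.obj (ModuleCat.of R R) ⟶ F.obj (ModuleCat.of R R)) => g y) (η F).inv_hom_id

lemma η_hom_eq (x : S) : (η F).hom x = x • one F := by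
  rw [one, ← map_smul, smul_eq_mul, mul_one]

/-- toSpanSingleton as a morphism from the "monoidal unit" `of R R`. -/
def ts {M : ModuleCat R} (m : M) : ModuleCat.of R R ⟶ M := ModuleCat.ofHom (LinearMap.toSpanSingleton R M m)

lemma ts_apply {M : ModuleCat R} (m : M) (r : R) : ts (M := M) m r = r • m := rfl

lemma ts_comp {M N : ModuleCat R} (φ : M ⟶ N) (m : M) : ts m ≫ φ = ts (φ m) :=
  ModuleCat.hom_ext <| LinearMap.ext fun r => map_smul φ.hom r m

lemma ts_one : ts (M := ModuleCat.of R R) (1 : R) = 𝟙 (ModuleCat.of R R) :=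
  ModuleCat.hom_ext <| LinearMap.ext fun (r : R) => by
    show r • (1 : R) = r
    rw [smul_eq_mul, mul_one]

lemma ts_comp_ts (r r' : R) :
    ts (M := ModuleCat.of R R) r ≫ ts (M := ModuleCat.of R R) r'
      = ts (M := ModuleCat.of R R) (r * r') :=
  ModuleCat.hom_ext <| LinearMap.ext fun (x : R) => by
    show (x • r) • r' = x • (r * r')
    show (x * r) * r' = x * (r * r')
    rw [mul_assoc]

lemma ts_add {M : ModuleCat R} (m m' : M) : ts (m + m') = ts m + ts m' :=
  ModuleCat.hom_ext <| LinearMap.ext fun (r : R) => by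
    show r • (m + m') = r • m + r • m'
    rw [smul_add]

lemma ts_zero {M : ModuleCat R} : ts (M := M) 0 = 0 :=
  ModuleCat.hom_ext <| LinearMap.ext fun (r : R) => by
    show r • (0 : M) = 0
    rw [smul_zero]

/-- underlying function of the ring homomorphism. -/
noncomputable def fAux (r : R) : S := (η F).inv (F.map (ts (r : ModuleCat.of R R)) (one F))

/-- the ring homomorphism. -/
noncomputable def f : R →+* S where
  toFun := fAux F
  map_one' := by
    show fAux F 1 = 1
    rw [fAux, ts_one, F.map_id, ModuleCat.id_apply, one, η_inv_hom]
  map_mul' r r' := by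
    show fAux F (r * r') = fAux F r * fAux F r'
    rw [fAux, ← ts_comp_ts, F.map_comp]
    have h1 : F.map (ts (r : ModuleCat.of R R)) (one F) = fAux F r • one F := by
      rw [← η_hom_eq, fAux, η_hom_inv]
    show ((η F).inv (F.map (ts (r' : ModuleCat.of R R)) (F.map (ts (r : ModuleCat.of R R)) (one F))) : S) = _
    rw [h1, map_smul, map_smul, smul_eq_mul]
    rfl
  map_zero' := by
    show fAux F 0 = 0
    rw [fAux, ts_zero, F.map_zero]
    erw [LinearMap.zero_apply]
    rw [map_zero]
  map_add' r r' := by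
    show fAux F (r + r') = fAux F r + fAux F r'
    rw [fAux, ts_add, F.map_add]
    erw [LinearMap.add_apply]
    rw [map_add]
    rfl

lemma f_spec (r : R) : F.map (ts ((r : R) : ModuleCat.of R R)) (one F) = (f F r) • one F := by
  rw [← η_hom_eq]
  show _ = (η F).hom ((η F).inv _)
  rw [η_hom_inv]

end EW

namespace EW2
open EW ModuleCat ChangeOfRings
variable {R S : Type} [CommRing R] [CommRing S]
  (F : ModuleCat R ⥤ ModuleCat S) [F.Additive] [Limits.PreservesColimits F] [F.Monoidal]

/-- The R-linear map `M → F M`, `m ↦ F(ts m)(one)`. -/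
noncomputable def gLin (M : ModuleCat R) : M →ₗ[R] (restrictScalars (f F)).obj (F.obj M) where
  toFun m := F.map (ts m) (one F)
  map_add' m m' := by
    dsimp only
    rw [ts_add, F.map_add]
    erw [LinearMap.add_apply]
    rfl
  map_smul' r m := by
    dsimp only
    have h : ts (r • m) = ts ((r : R) : ModuleCat.of R R) ≫ ts m :=
      ModuleCat.hom_ext <| LinearMap.ext fun (x : R) => by
        show x • (r • m) = (x • r) • m
        rw [smul_smul, smul_eq_mul]
    rw [h, F.map_comp]
    show F.map (ts m) (F.map (ts ((r : R) : ModuleCat.of R R)) (one F)) = _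
    rw [f_spec, map_smul]
    rfl

noncomputable def g (M : ModuleCat R) : M ⟶ (restrictScalars (f F)).obj (F.obj M) :=
  ModuleCat.ofHom (X := M) (Y := (restrictScalars (f F)).obj (F.obj M)) (gLin F M)

lemma g_natural {M N : ModuleCat R} (φ : M ⟶ N) :
    φ ≫ g F N = g F M ≫ (restrictScalars (f F)).map (F.map φ) :=
  ModuleCat.hom_ext <| LinearMap.ext fun m => by
    show F.map (ts (φ m)) (one F) = (restrictScalars (f F)).map (F.map φ) (F.map (ts m) (one F))
    rw [← ts_comp, F.map_comp]
    rfl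

/-- The natural transformation `extendScalars (f F) ⟶ F`. -/
noncomputable def τ : ModuleCat.extendScalars (f F) ⟶ F where
  app M := ((ModuleCat.extendRestrictScalarsAdj (f F)).homEquiv M (F.obj M)).symm (g F M)
  naturality M N φ := by
    rw [← Adjunction.homEquiv_naturality_left_symm,
      ← Adjunction.homEquiv_naturality_right_symm, g_natural]

lemma τ_tmul {M : ModuleCat R} (s : S) (m : M) :
    (τ F).app M (s ⊗ₜ[R,f F] m) = s • (F.map (ts m) (one F)) := by
  letI : Module R S := Module.compHom S (f F)
  letI : Module R (F.obj M) := Module.compHom (F.obj M) (f F)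
  show ((ModuleCat.extendRestrictScalarsAdj (f F)).homEquiv M (F.obj M)).symm (g F M) _ = _
  rw [Adjunction.homEquiv_counit]
  show (ModuleCat.ExtendRestrictScalarsAdj.counit (f F)).app (F.obj M)
      ((ModuleCat.extendScalars (f F)).map (g F M) (s ⊗ₜ[R,f F] m)) = _
  rw [ModuleCat.ExtendScalars.map_tmul, ModuleCat.ExtendRestrictScalarsAdj.counit_app]
  erw [ModuleCat.ExtendRestrictScalarsAdj.Counit.map_hom_apply]
  rfl

end EW2

namespace EW2
open EW ModuleCat ChangeOfRings TensorProduct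
variable {R S : Type} [CommRing R] [CommRing S]
  (F : ModuleCat R ⥤ ModuleCat S) [F.Additive] [Limits.PreservesColimits F] [F.Monoidal]

/-- `s ↦ s ⊗ 1` as a morphism `S ⟶ S ⊗ R`. -/
noncomputable def ρinvLin : S →ₗ[S] (extendScalars (f F)).obj (ModuleCat.of R R) where
  toFun s := (show S from s) ⊗ₜ[R,f F] ((1 : R) : ModuleCat.of R R)
  map_add' s t := by
    letI : Module R S := Module.compHom S (f F)
    exact TensorProduct.add_tmul (show S from s) (show S from t) _
  map_smul' s t := by
    dsimp only
    rw [RingHom.id_apply]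
    exact (ModuleCat.ExtendScalars.smul_tmul (f F) (show S from s) (show S from t) (1 : ModuleCat.of R R)).symm

noncomputable def ρinv : ModuleCat.of S S ⟶ (extendScalars (f F)).obj (ModuleCat.of R R) :=
  ModuleCat.ofHom (X := S) (Y := (extendScalars (f F)).obj (ModuleCat.of R R)) (ρinvLin F)

lemma isIso_τ_unit : IsIso ((τ F).app (ModuleCat.of R R)) := by
  refine ⟨(η F).inv ≫ ρinv F, ?_, ?_⟩
  · apply ModuleCat.hom_ext
    apply LinearMap.ext
    intro z
    show ((η F).inv ≫ ρinv F) ((τ F).app (ModuleCat.of R R) z) = z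
    induction z using TensorProduct.induction_on with
    | zero =>
      show ((η F).inv ≫ ρinv F) ((τ F).app (ModuleCat.of R R) 0) = 0
      rw [map_zero, map_zero]
    | tmul s r =>
      change S at s
      show ((η F).inv ≫ ρinv F) ((τ F).app (ModuleCat.of R R) (s ⊗ₜ[R,f F] r)) = s ⊗ₜ[R,f F] r
      rw [τ_tmul]
      show ρinv F ((η F).inv (s • F.map (ts ((r : R) : ModuleCat.of R R)) (one F))) = _
      rw [f_spec, smul_smul, ← η_hom_eq, η_inv_hom]
      show ((s * f F r) ⊗ₜ[R,f F] ((1:R) : ModuleCat.of R R)) = s ⊗ₜ[R,f F] r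
      rw [mul_comm]
      have h1 : ((f F r * s) ⊗ₜ[R,f F] ((1:R) : ModuleCat.of R R))
          = s ⊗ₜ[R,f F] ((show R from r) • (1:R)) := by
        letI : Module R S := Module.compHom S (f F)
        exact TensorProduct.smul_tmul (show R from r) s (1 : R)
      rw [h1, smul_eq_mul, mul_one]
    | add x y hx hy =>
      exact (congrArg _ (map_add ((τ F).app (ModuleCat.of R R)).hom x y)).trans
        ((map_add ((η F).inv ≫ ρinv F).hom _ _).trans (congrArg₂ (· + ·) hx hy))
  · apply ModuleCat.hom_ext
    apply LinearMap.ext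
    intro y
    show (τ F).app (ModuleCat.of R R) (ρinv F ((η F).inv y)) = y
    show (τ F).app (ModuleCat.of R R) (((η F).inv y : S) ⊗ₜ[R,f F] ((1:R) : ModuleCat.of R R)) = y
    rw [τ_tmul, ts_one, F.map_id, ModuleCat.id_apply, one, ← map_smul, smul_eq_mul, mul_one,
      η_hom_inv]

end EW2

namespace EW3
open CategoryTheory Limits

variable {J C D : Type*} [Category J] [Category C] [Category D]

lemma isIso_app_of_isColimit {G H : C ⥤ D} (α : G ⟶ H) {K : J ⥤ C} {c : Cocone K}
    (h1 : IsColimit (G.mapCocone c)) (h2 : IsColimit (H.mapCocone c))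
    (hj : ∀ j, IsIso (α.app (K.obj j))) : IsIso (α.app c.pt) := by
  let e : K ⋙ G ≅ K ⋙ H :=
    NatIso.ofComponents (fun j => asIso (α.app (K.obj j))) (fun φ => α.naturality _)
  have heq : α.app c.pt = (IsColimit.coconePointsIsoOfNatIso h1 h2 e).hom := by
    refine h1.hom_ext fun j => ?_
    rw [IsColimit.comp_coconePointsIsoOfNatIso_hom]
    dsimp [e]
    exact α.naturality _
  rw [heq]
  infer_instance

lemma isIso_app_of_iso {G H : C ⥤ D} (α : G ⟶ H) {M N : C} (e : M ≅ N)
    (h : IsIso (α.app N)) : IsIso (α.app M) := by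
  have heq : α.app M = G.map e.hom ≫ α.app N ≫ H.map e.inv := by
    rw [← Category.assoc, α.naturality, Category.assoc, ← H.map_comp, e.hom_inv_id, H.map_id,
      Category.comp_id]
  rw [heq]
  infer_instance

variable (R : Type) [CommRing R]

/-- the cofan exhibiting `ι →₀ R` as coproduct of copies of `R`. -/
noncomputable def finsuppCofan (ι : Type) : Cofan (fun _ : ι => ModuleCat.of R R) :=
  Cofan.mk (ModuleCat.of R (ι →₀ R))
    (fun i => ModuleCat.ofHom (Finsupp.lsingle i : R →ₗ[R] (ι →₀ R)))

noncomputable def finsuppCofanIsColimit (ι : Type) : IsColimit (finsuppCofan R ι) :=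
  mkCofanColimit _
    (fun t => ModuleCat.ofHom (Finsupp.lsum ℕ (fun i => (t.inj i).hom) : (ι →₀ R) →ₗ[R] t.pt))
    (fun t i => ModuleCat.hom_ext <| LinearMap.ext fun (r : R) => by
      show Finsupp.lsum ℕ (fun i => (t.inj i).hom) (Finsupp.single i r) = t.inj i r
      rw [Finsupp.lsum_single])
    (fun t m hm => by
      refine ModuleCat.hom_ext <| Finsupp.lhom_ext' fun i => ?_
      refine LinearMap.ext fun (r : R) => ?_
      show m (Finsupp.single i r) = Finsupp.lsum ℕ (fun i => (t.inj i).hom)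
        (Finsupp.single i r)
      rw [Finsupp.lsum_single]
      exact congrArg (fun (φ : ModuleCat.of R R ⟶ t.pt) => φ r) (hm i))

end EW3

namespace EW2
open EW EW3 ModuleCat
variable {R S : Type} [CommRing R] [CommRing S]
  (F : ModuleCat R ⥤ ModuleCat S) [F.Additive] [Limits.PreservesColimits F] [F.Monoidal]

lemma isIso_τ_free (ι : Type) : IsIso ((τ F).app (ModuleCat.of R (ι →₀ R))) := by
  haveI : Limits.PreservesColimits (ModuleCat.extendScalars (f F)) :=
    (ModuleCat.extendRestrictScalarsAdj (f F)).leftAdjoint_preservesColimits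
  have hc := finsuppCofanIsColimit R ι
  have h1 : IsColimit ((ModuleCat.extendScalars (f F)).mapCocone (finsuppCofan R ι)) :=
    Limits.isColimitOfPreserves _ hc
  have h2 : IsColimit (F.mapCocone (finsuppCofan R ι)) := Limits.isColimitOfPreserves F hc
  have hh := isIso_app_of_isColimit (τ F) h1 h2 (fun j => isIso_τ_unit F)
  exact hh

set_option maxHeartbeats 1000000 in
lemma isIso_τ_all (M : ModuleCat R) : IsIso ((τ F).app M) := by
  haveI : Limits.PreservesColimits (ModuleCat.extendScalars (f F)) :=
    (ModuleCat.extendRestrictScalarsAdj (f F)).leftAdjoint_preservesColimits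
  let e0 : (M →₀ R) →ₗ[R] M := Finsupp.linearCombination R (id : M → M)
  have he0 : Function.Surjective e0 := Finsupp.linearCombination_id_surjective R M
  let u : ModuleCat.of R ((LinearMap.ker e0) →₀ R) ⟶ ModuleCat.of R (M →₀ R) :=
    ModuleCat.ofHom (Finsupp.linearCombination R (Subtype.val : LinearMap.ker e0 → (M →₀ R)))
  have hrange : LinearMap.range u.hom = LinearMap.ker e0 := by
    rw [ModuleCat.hom_ofHom, Finsupp.range_linearCombination, Subtype.range_coe, Submodule.span_eq]
  have hcol := ModuleCat.cokernelIsColimit u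
  have h1 : IsColimit ((ModuleCat.extendScalars (f F)).mapCocone (ModuleCat.cokernelCocone u)) :=
    Limits.isColimitOfPreserves _ hcol
  have h2 : IsColimit (F.mapCocone (ModuleCat.cokernelCocone u)) :=
    Limits.isColimitOfPreserves F hcol
  have hiso : IsIso ((τ F).app ((ModuleCat.cokernelCocone u).pt)) := by
    refine isIso_app_of_isColimit (τ F) h1 h2 ?_
    intro j
    cases j
    · exact isIso_τ_free F _
    · exact isIso_τ_free F _
  letI e1 : ((M →₀ R) ⧸ LinearMap.range u.hom) ≃ₗ[R] M :=
    (Submodule.quotEquivOfEq _ _ hrange).trans (e0.quotKerEquivOfSurjective he0)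
  exact isIso_app_of_iso (τ F) (e1.symm.toModuleIso) hiso

end EW2

/-- Every cocontinuous additive monoidal functor `Mod R ⥤ Mod S` between module
categories over commutative rings is naturally isomorphic to extension of scalars
along some ring homomorphism `f : R →+* S`. -/
theorem exists_ringHom_extendScalars_iso_of_monoidal
    {R : Type} {S : Type} [CommRing R] [CommRing S]
    (F : ModuleCat R ⥤ ModuleCat S) [F.Additive]
    [Limits.PreservesColimits F] [F.Monoidal] :
    ∃ f : R →+* S, Nonempty (F ≅ ModuleCat.extendScalars f) := by
  refine ⟨EW.f F, ⟨?_⟩⟩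
  haveI : ∀ M, IsIso ((EW2.τ F).app M) := EW2.isIso_τ_all F
  haveI : IsIso (EW2.τ F) := NatIso.isIso_of_isIso_app _
  exact (asIso (EW2.τ F)).symm
end

section
/- Let A be a commutative ring equipped with an ℝ-algebra structure, and suppose there exists an isomorphism of ℂ-algebras between ℂ ⊗[ℝ] A and ℂ × ℂ. Then either A is isomorphic to ℝ × ℝ as an ℝ-algebra, or A is isomorphic to ℂ as an ℝ-algebra. -/
open TensorProduct

/-- An `ℝ`-algebra `A` whose complexification is isomorphic to `ℂ × ℂ` as a
`ℂ`-algebra is isomorphic, as an `ℝ`-algebra, either to `ℝ × ℝ` or to `ℂ`. -/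
theorem z2_torsors_over_real
    (A : Type) [CommRing A] [Algebra ℝ A]
    (h : Nonempty ((ℂ ⊗[ℝ] A) ≃ₐ[ℂ] ℂ × ℂ)) :
    Nonempty (A ≃ₐ[ℝ] ℝ × ℝ) ∨ Nonempty (A ≃ₐ[ℝ] ℂ) := by
  obtain ⟨e⟩ := h
  -- the rank of A over ℝ is 2
  have hrk : Module.rank ℝ A = 2 := by
    have h1 : Module.rank ℂ (ℂ ⊗[ℝ] A) = Module.rank ℝ A := by
      simpa using Module.rank_baseChange (R := ℂ) (M' := A)
    have h2 : Module.rank ℂ (ℂ × ℂ) = 2 := by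
      simp [rank_prod', one_add_one_eq_two]
    rw [← h1, e.toLinearEquiv.rank_eq, h2]
  have hfd : FiniteDimensional ℝ A := FiniteDimensional.of_rank_eq_nat (by exact_mod_cast hrk)
  have hfr : Module.finrank ℝ A = 2 := Module.finrank_eq_of_rank_eq (by exact_mod_cast hrk)
  have hnt : Nontrivial A := by
    rw [← rank_pos_iff_nontrivial (R := ℝ), hrk]
    norm_num
  -- pick a not in ℝ • 1
  have hex : ∃ a : A, ∀ c : ℝ, c • (1 : A) ≠ a := by
    by_contra hc
    push_neg at hc
    have hsp : Submodule.span ℝ {(1 : A)} = ⊤ := by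
      rw [Submodule.eq_top_iff']
      intro x
      rw [Submodule.mem_span_singleton]
      exact hc x
    have h1 : Module.finrank ℝ (Submodule.span ℝ {(1 : A)}) = 1 :=
      finrank_span_singleton one_ne_zero
    rw [hsp, finrank_top, hfr] at h1
    norm_num at h1
  obtain ⟨a, ha⟩ := hex
  have lia : LinearIndependent ℝ ![a, 1] := by
    rw [linearIndependent_fin2]
    exact ⟨by simpa using one_ne_zero, by simpa using ha⟩
  let B₀ := basisOfLinearIndependentOfCardEqFinrank lia (by simp [hfr])
  have hB₀ : ⇑B₀ = ![a, 1] := coe_basisOfLinearIndependentOfCardEqFinrank lia _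
  obtain ⟨p, q, haa⟩ : ∃ s t : ℝ, a * a = s • a + t • 1 := by
    refine ⟨B₀.repr (a * a) 0, B₀.repr (a * a) 1, ?_⟩
    conv_lhs => rw [← B₀.sum_repr (a * a)]
    simp [hB₀, Fin.sum_univ_two]
  set b : A := a - (p / 2) • 1 with hbdef
  set r : ℝ := q + p ^ 2 / 4 with hrdef
  have hb2 : b * b = r • 1 := by
    have h1 : b * b = a * a - p • a + (p ^ 2 / 4) • 1 := by
      rw [hbdef, sub_mul, mul_sub, mul_sub, smul_mul_assoc, mul_smul_comm, smul_mul_assoc]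
      simp only [mul_one, one_mul, smul_smul]
      module
    rw [h1, haa, hrdef]
    module
  have hb : ∀ c : ℝ, c • (1 : A) ≠ b := by
    intro c hc
    apply ha (c + p / 2)
    rw [add_smul, hc, hbdef]
    abel
  have hbne : b ≠ 0 := by
    intro h0
    exact hb 0 (by rw [zero_smul, h0])
  have lib : LinearIndependent ℝ ![b, 1] := by
    rw [linearIndependent_fin2]
    exact ⟨by simpa using one_ne_zero, by simpa using hb⟩
  let B := basisOfLinearIndependentOfCardEqFinrank lib (by simp [hfr])
  have hB : ⇑B = ![b, 1] := coe_basisOfLinearIndependentOfCardEqFinrank lib _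
  rcases lt_trichotomy r 0 with hr | hr | hr
  · -- r < 0 : A ≅ ℂ
    set s : ℝ := Real.sqrt (-r) with hsdef
    have hss : s * s = -r := Real.mul_self_sqrt (by linarith)
    have hs0 : s ≠ 0 := by
      intro h0
      rw [h0, mul_zero] at hss
      linarith
    set j : A := s⁻¹ • b with hjdef
    have hj : j * j = -1 := by
      rw [hjdef, smul_mul_smul_comm, hb2, smul_smul]
      have : s⁻¹ * s⁻¹ * r = -1 := by
        field_simp
        linarith [hss]
      rw [this, neg_smul, one_smul]
    let φ : ℂ →ₐ[ℝ] A := Complex.lift ⟨j, hj⟩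
    have hinj : Function.Injective φ := φ.toRingHom.injective
    let ψ := LinearMap.linearEquivOfInjective φ.toLinearMap hinj
      (by rw [Complex.finrank_real_complex, hfr])
    have hsurj : Function.Surjective φ := by
      intro y
      refine ⟨ψ.symm y, ?_⟩
      have := ψ.apply_symm_apply y
      exact this
    exact Or.inr ⟨(AlgEquiv.ofBijective φ ⟨hinj, hsurj⟩).symm⟩
  · -- r = 0 : contradiction with reducedness of ℂ × ℂ
    exfalso
    have hbb : b * b = 0 := by rw [hb2, hr, zero_smul]
    have hnz : (1 : ℂ) ⊗ₜ[ℝ] b ≠ (0 : ℂ ⊗[ℝ] A) := by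
      have h0 := (B.baseChange ℂ).ne_zero 0
      rwa [Module.Basis.baseChange_apply, hB, show ![b, (1 : A)] 0 = b from rfl] at h0
    have hsq : e ((1 : ℂ) ⊗ₜ[ℝ] b) * e ((1 : ℂ) ⊗ₜ[ℝ] b) = 0 := by
      rw [← map_mul, Algebra.TensorProduct.tmul_mul_tmul, hbb, TensorProduct.tmul_zero, map_zero]
    have h0 : e ((1 : ℂ) ⊗ₜ[ℝ] b) = 0 := by
      have h1 : (e ((1 : ℂ) ⊗ₜ[ℝ] b)).1 * (e ((1 : ℂ) ⊗ₜ[ℝ] b)).1 = 0 := congrArg Prod.fst hsq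
      have h2 : (e ((1 : ℂ) ⊗ₜ[ℝ] b)).2 * (e ((1 : ℂ) ⊗ₜ[ℝ] b)).2 = 0 := congrArg Prod.snd hsq
      exact Prod.ext (mul_self_eq_zero.mp h1) (mul_self_eq_zero.mp h2)
    exact hnz (e.injective (by rw [h0, map_zero]))
  · -- r > 0 : A ≅ ℝ × ℝ
    set s : ℝ := Real.sqrt r with hsdef
    have hss : s * s = r := Real.mul_self_sqrt (le_of_lt hr)
    have hs0 : s ≠ 0 := by
      intro h0
      rw [h0, mul_zero] at hss
      linarith
    set u : A := s⁻¹ • b with hudef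
    have huu : u * u = 1 := by
      rw [hudef, smul_mul_smul_comm, hb2, smul_smul]
      have : s⁻¹ * s⁻¹ * r = 1 := by
        field_simp
        linarith [hss]
      rw [this, one_smul]
    have hbu : b = s • u := by
      rw [hudef, smul_smul, mul_inv_cancel₀ hs0, one_smul]
    set ε : A := (2⁻¹ : ℝ) • (1 + u) with hεdef
    have hε : ε * ε = ε := by
      have h1 : (1 + u) * (1 + u) = (2 : ℝ) • (1 + u) := by
        rw [mul_add, add_mul, add_mul, huu]
        simp only [one_mul, mul_one]
        module
      rw [hεdef, smul_mul_smul_comm, h1, smul_smul]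
      norm_num
    set f : A := 1 - ε with hfdef
    have hεf : ε * f = 0 := by
      rw [hfdef, mul_sub, mul_one, hε, sub_self]
    have hfε : f * ε = 0 := by rw [mul_comm, hεf]
    have hff : f * f = f := by
      rw [hfdef, sub_mul, one_mul, mul_sub, mul_one, hε, sub_self, sub_zero]
    have hεne : ε ≠ 0 := by
      intro h0
      rw [hεdef, smul_eq_zero] at h0
      rcases h0 with h0 | h0
      · norm_num at h0
      · have hu : u = -1 := by linear_combination h0
        apply hb (-s)
        rw [hbu, hu, smul_neg, neg_smul]
    have hfne : f ≠ 0 := by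
      intro h0
      have hε1 : ε = 1 := by
        rw [hfdef, sub_eq_zero] at h0
        exact h0.symm
      have hu : u = 1 := by
        have h3 : (1 : A) + u = (1 : A) + 1 := by
          calc (1 : A) + u = (2 : ℝ) • ((2⁻¹ : ℝ) • ((1 : A) + u)) := by
                rw [smul_smul]; norm_num
            _ = (2 : ℝ) • (1 : A) := by rw [← hεdef, hε1]
            _ = (1 : A) + 1 := two_smul ℝ 1
        exact add_left_cancel h3
      apply hb s
      rw [hbu, hu]
    let L : ℝ × ℝ →ₗ[ℝ] A :=
      (LinearMap.toSpanSingleton ℝ A ε).coprod (LinearMap.toSpanSingleton ℝ A f)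
    have hL : ∀ z : ℝ × ℝ, L z = z.1 • ε + z.2 • f := fun z => rfl
    have key : ∀ x1 x2 y1 y2 : ℝ,
        (x1 • ε + x2 • f) * (y1 • ε + y2 • f) = (x1 * y1) • ε + (x2 * y2) • f := by
      intro x1 x2 y1 y2
      have e1 : (x1 • ε) * (y1 • ε) = (x1 * y1) • (ε * ε) := smul_mul_smul_comm x1 ε y1 ε
      have e2 : (x1 • ε) * (y2 • f) = (x1 * y2) • (ε * f) := smul_mul_smul_comm x1 ε y2 f
      have e3 : (x2 • f) * (y1 • ε) = (x2 * y1) • (f * ε) := smul_mul_smul_comm x2 f y1 ε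
      have e4 : (x2 • f) * (y2 • f) = (x2 * y2) • (f * f) := smul_mul_smul_comm x2 f y2 f
      rw [add_mul, mul_add, mul_add, e1, e2, e3, e4, hε, hεf, hfε, hff, smul_zero, smul_zero]
      module
    let φ : ℝ × ℝ →ₐ[ℝ] A := AlgHom.ofLinearMap L
      (by rw [hL]; show (1 : ℝ) • ε + (1 : ℝ) • f = 1; rw [one_smul, one_smul, hfdef]; abel)
      (by
        intro z w
        rw [hL, hL, hL]
        have : (z * w).1 = z.1 * w.1 ∧ (z * w).2 = z.2 * w.2 := ⟨rfl, rfl⟩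
        rw [this.1, this.2, key])
    have hinj : Function.Injective φ := by
      rw [show (φ : ℝ × ℝ → A) = L from rfl, ← LinearMap.ker_eq_bot, LinearMap.ker_eq_bot']
      intro z hz
      rw [hL] at hz
      have h1 : z.1 • ε = 0 := by
        have := congrArg (· * ε) hz
        simpa [add_mul, smul_mul_assoc, hε, hfε, smul_zero] using this
      have h2 : z.2 • f = 0 := by
        have := congrArg (· * f) hz
        simpa [add_mul, smul_mul_assoc, hff, hεf, smul_zero] using this
      have hz1 : z.1 = 0 := by
        rcases smul_eq_zero.mp h1 with h | h
        · exact h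
        · exact absurd h hεne
      have hz2 : z.2 = 0 := by
        rcases smul_eq_zero.mp h2 with h | h
        · exact h
        · exact absurd h hfne
      exact Prod.ext hz1 hz2
    let ψ := LinearMap.linearEquivOfInjective φ.toLinearMap hinj
      (by rw [Module.finrank_prod, Module.finrank_self, hfr])
    have hsurj : Function.Surjective φ := by
      intro y
      refine ⟨ψ.symm y, ?_⟩
      have := ψ.apply_symm_apply y
      exact this
    exact Or.inl ⟨(AlgEquiv.ofBijective φ ⟨hinj, hsurj⟩).symm⟩
end

section
/- Let K be a field, let C be a category with zero morphisms, and let F be a functor from the category of K-modules (K-vector spaces) to C. Suppose there exist K-modules X and Y and a K-linear map f : X → Y with f ≠ 0 such that F(f) is the zero morphism. Then the identity morphism of F(K) (the image of the one-dimensional module K) is the zero morphism, i.e. F(K) is a zero object of its hom-closure. -/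
open CategoryTheory

/-- If a functor from the category of vector spaces over a field `K` to a
category with zero morphisms kills some nonzero linear map, then the identity of
the image of the one-dimensional vector space `K` is zero. -/
theorem id_image_of_unit_eq_zero_of_kills_nonzero_map
    (K : Type) [Field K] (C : Type) [Category C] [Limits.HasZeroMorphisms C]
    (F : ModuleCat K ⥤ C) (X Y : ModuleCat K) (f : X ⟶ Y)
    (hf : f ≠ 0) (hFf : F.map f = 0) :
    𝟙 (F.obj (ModuleCat.of K K)) = 0 := by
  -- find x with f x ≠ 0
  obtain ⟨x, hx⟩ : ∃ x : X, f x ≠ 0 := by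
    by_contra h
    push_neg at h
    exact hf (by ext x; exact h x)
  -- find a dual functional φ with φ (f x) ≠ 0
  obtain ⟨φ, hφ⟩ : ∃ φ : Module.Dual K Y, φ (f x) ≠ 0 := by
    by_contra h
    push_neg at h
    exact hx ((Module.forall_dual_apply_eq_zero_iff K (f x)).mp h)
  set i : ModuleCat.of K K ⟶ X := ModuleCat.ofHom (LinearMap.toSpanSingleton K X x)
  set p : Y ⟶ ModuleCat.of K K := ModuleCat.ofHom ((φ (f x))⁻¹ • φ)
  have hcomp : i ≫ f ≫ p = 𝟙 (ModuleCat.of K K) := by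
    refine ModuleCat.hom_ext (LinearMap.ext fun a => ?_)
    show ((φ (f x))⁻¹ • φ) (f (a • x)) = a
    rw [map_smul]
    simp only [smul_smul, LinearMap.smul_apply, smul_eq_mul, map_smul]
    field_simp
  calc 𝟙 (F.obj (ModuleCat.of K K)) = F.map (i ≫ f ≫ p) := by rw [hcomp, F.map_id]
    _ = F.map i ≫ F.map f ≫ F.map p := by simp
    _ = 0 := by rw [hFf]; simp
end
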